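/- arXiv:1309.3898 — 2 statements merged into one kernel-verified Lean document; each statement's English description precedes it below -/
import Mathlib

section
/- Let f: Ω → ℝ be C¹ on an open set Ω ⊆ ℝ^d, and suppose there is an integral curve of the gradient flow γ' = -∇f(γ) joining x to y (i.e., γ(0) = x, γ(T) = y for some T > 0, γ([0,T]) ⊆ Ω). Then the Agmon pseudo-distance satisfies d_Ag(x,y) = |f(x) - f(y)| = f(x) - f(y). -/
/-!
Along any `C¹` path `η` in `Ω`, the chain rule and the fundamental theorem of calculus give
`f (η 1) - f (η 0) = ∫ ⟪∇f(η), η'⟫`, and Cauchy–Schwarz bounds this by the Agmon length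
`∫ ‖∇f(η)‖ ‖η'‖`; hence `d_Ag(x, y) ≥ |f x - f y|`. Along a gradient curve, rescaled to the time
interval `[0, 1]`, the velocity is a nonnegative multiple of `-∇f`, which is the equality case of
Cauchy–Schwarz: its Agmon length is exactly `f x - f y`, so it realizes the infimum.
-/

/-- The Agmon pseudo-distance associated to the degenerate metric `|∇f|² g` on `Ω`:
the infimum of `∫₀¹ ‖∇f(γ t)‖ ‖γ' t‖ dt` over `C¹` paths `γ` in `Ω` joining `x` to `y`. -/
noncomputable def agmonDist {d : ℕ} (f : EuclideanSpace ℝ (Fin d) → ℝ)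
    (Ω : Set (EuclideanSpace ℝ (Fin d))) (x y : EuclideanSpace ℝ (Fin d)) : ℝ :=
  sInf {L : ℝ | ∃ γ : ℝ → EuclideanSpace ℝ (Fin d),
    ContDiffOn ℝ 1 γ (Set.Icc 0 1) ∧ (∀ t ∈ Set.Icc (0 : ℝ) 1, γ t ∈ Ω) ∧
    γ 0 = x ∧ γ 1 = y ∧
    L = ∫ t in (0 : ℝ)..1, ‖gradient f (γ t)‖ * ‖deriv γ t‖}

open Set MeasureTheory InnerProductSpace
open scoped RealInnerProductSpace

theorem intervalIntegrable_comp_deriv_of_continuousOn_derivWithin {F G : Type*}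
    [NormedAddCommGroup F] [NormedSpace ℝ F] [NormedAddCommGroup G] {a b : ℝ} (hab : a ≤ b)
    {η : ℝ → F} {Φ : ℝ → F → G}
    (hΦ : ContinuousOn (fun t => Φ t (derivWithin η (Icc a b) t)) (Icc a b)) :
    IntervalIntegrable (fun t => Φ t (deriv η t)) volume a b :=
  (hΦ.intervalIntegrable_of_Icc hab).congr_uIoo fun t ht => by
    rw [uIoo_of_le hab] at ht
    exact congrArg (Φ t) (derivWithin_of_mem_nhds (Icc_mem_nhds ht.1 ht.2))

theorem contDiffOn_one_of_forall_hasDerivAt {F : Type*} [NormedAddCommGroup F] [NormedSpace ℝ F]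
    {s : Set ℝ} (hs : UniqueDiffOn ℝ s) {η η' : ℝ → F} (hη : ∀ t ∈ s, HasDerivAt η (η' t) t)
    (hη' : ContinuousOn η' s) : ContDiffOn ℝ 1 η s := by
  rw [contDiffOn_one_iff_derivWithin hs]
  exact ⟨fun t ht => (hη t ht).differentiableAt.differentiableWithinAt,
    hη'.congr fun t ht => (hη t ht).hasDerivWithinAt.derivWithin (hs t ht)⟩

section Gradient

variable {E : Type*} [NormedAddCommGroup E] [InnerProductSpace ℝ E] [CompleteSpace E]
  {f : E → ℝ} {Ω : Set E} {η : ℝ → E} {a b : ℝ}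

theorem ContDiffOn.continuousOn_gradient (hf : ContDiffOn ℝ 1 f Ω) (hΩ : IsOpen Ω) :
    ContinuousOn (gradient f) Ω :=
  (toDual ℝ E).symm.continuous.comp_continuousOn (hf.continuousOn_fderiv_of_isOpen hΩ le_rfl)

theorem HasGradientAt.comp_hasDerivAt {g v : E} {t : ℝ} (hf : HasGradientAt f g (η t))
    (hη : HasDerivAt η v t) : HasDerivAt (fun s => f (η s)) ⟪g, v⟫ t := by
  have h := hf.hasFDerivAt.comp_hasDerivAt t hη
  rwa [toDual_apply_apply] at h

theorem integral_inner_gradient_deriv_eq_sub (hab : a < b) (hf : ContDiffOn ℝ 1 f Ω)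
    (hΩ : IsOpen Ω) (hη : ContDiffOn ℝ 1 η (Icc a b)) (hηΩ : MapsTo η (Icc a b) Ω) :
    ∫ t in a..b, ⟪gradient f (η t), deriv η t⟫ = f (η b) - f (η a) := by
  refine intervalIntegral.integral_eq_sub_of_hasDeriv_right_of_le hab.le
    (hf.continuousOn.comp hη.continuousOn hηΩ) (fun t ht => ?_)
    (intervalIntegrable_comp_deriv_of_continuousOn_derivWithin hab.le
      (((hf.continuousOn_gradient hΩ).comp hη.continuousOn hηΩ).inner
        (hη.continuousOn_derivWithin (uniqueDiffOn_Icc hab) le_rfl)))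
  have hfη : DifferentiableAt ℝ f (η t) :=
    (hf.differentiableOn one_ne_zero _ (hηΩ (Ioo_subset_Icc_self ht))).differentiableAt
      (hΩ.mem_nhds (hηΩ (Ioo_subset_Icc_self ht)))
  have hηt : DifferentiableAt ℝ η t :=
    (hη.differentiableOn one_ne_zero t (Ioo_subset_Icc_self ht)).differentiableAt
      (Icc_mem_nhds ht.1 ht.2)
  exact (hfη.hasGradientAt.comp_hasDerivAt hηt.hasDerivAt).hasDerivWithinAt

theorem abs_sub_le_integral_norm_gradient_mul_norm_deriv (hab : a < b) (hf : ContDiffOn ℝ 1 f Ω)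
    (hΩ : IsOpen Ω) (hη : ContDiffOn ℝ 1 η (Icc a b)) (hηΩ : MapsTo η (Icc a b) Ω) :
    |f (η b) - f (η a)| ≤ ∫ t in a..b, ‖gradient f (η t)‖ * ‖deriv η t‖ := by
  rw [← integral_inner_gradient_deriv_eq_sub hab hf hΩ hη hηΩ, ← Real.norm_eq_abs]
  exact intervalIntegral.norm_integral_le_of_norm_le hab.le
    (Filter.Eventually.of_forall fun _ _ => norm_inner_le_norm _ _)
    (intervalIntegrable_comp_deriv_of_continuousOn_derivWithin hab.le
      (Φ := fun t v => ‖gradient f (η t)‖ * ‖v‖)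
      (((hf.continuousOn_gradient hΩ).comp hη.continuousOn hηΩ).norm.mul
        (hη.continuousOn_derivWithin (uniqueDiffOn_Icc hab) le_rfl).norm))

theorem integral_norm_gradient_mul_norm_deriv_eq_sub_of_deriv_eq_smul (hab : a < b)
    (hf : ContDiffOn ℝ 1 f Ω) (hΩ : IsOpen Ω) (hη : ContDiffOn ℝ 1 η (Icc a b))
    (hηΩ : MapsTo η (Icc a b) Ω) {c : ℝ} (hc : 0 ≤ c)
    (hflow : ∀ t ∈ Icc a b, deriv η t = c • -gradient f (η t)) :
    ∫ t in a..b, ‖gradient f (η t)‖ * ‖deriv η t‖ = f (η a) - f (η b) := by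
  have hcs : EqOn (fun t => ‖gradient f (η t)‖ * ‖deriv η t‖)
      (fun t => -⟪gradient f (η t), deriv η t⟫) (uIcc a b) := by
    intro t ht
    rw [uIcc_of_le hab.le] at ht
    simp only [hflow t ht, norm_smul, norm_neg, inner_smul_right, inner_neg_right,
      real_inner_self_eq_norm_sq, Real.norm_of_nonneg hc]
    ring
  rw [intervalIntegral.integral_congr hcs, intervalIntegral.integral_neg,
    integral_inner_gradient_deriv_eq_sub hab hf hΩ hη hηΩ, neg_sub]

end Gradient

theorem agmonDist_eq_of_integral_eq_abs_sub {d : ℕ} {f : EuclideanSpace ℝ (Fin d) → ℝ}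
    {Ω : Set (EuclideanSpace ℝ (Fin d))} (hΩ : IsOpen Ω) (hf : ContDiffOn ℝ 1 f Ω)
    {x y : EuclideanSpace ℝ (Fin d)} {δ : ℝ → EuclideanSpace ℝ (Fin d)}
    (hδ : ContDiffOn ℝ 1 δ (Icc 0 1)) (hδΩ : MapsTo δ (Icc 0 1) Ω) (hδ0 : δ 0 = x)
    (hδ1 : δ 1 = y) (hlen : ∫ t in (0 : ℝ)..1, ‖gradient f (δ t)‖ * ‖deriv δ t‖ = |f x - f y|) :
    agmonDist f Ω x y = |f x - f y| := by
  refine IsLeast.csInf_eq ⟨⟨δ, hδ, hδΩ, hδ0, hδ1, hlen.symm⟩, ?_⟩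
  rintro L ⟨η, hη, hηΩ, rfl, rfl, rfl⟩
  rw [abs_sub_comm]
  exact abs_sub_le_integral_norm_gradient_mul_norm_deriv zero_lt_one hf hΩ hη hηΩ

theorem agmonDist_eq_of_gradient_curve_general {d : ℕ} (f : EuclideanSpace ℝ (Fin d) → ℝ)
    (Ω : Set (EuclideanSpace ℝ (Fin d))) (hΩ : IsOpen Ω) (hf : ContDiffOn ℝ 1 f Ω)
    (x y : EuclideanSpace ℝ (Fin d))
    (γ : ℝ → EuclideanSpace ℝ (Fin d)) (T : ℝ) (hT : 0 < T)
    (hmem : ∀ t ∈ Set.Icc (0 : ℝ) T, γ t ∈ Ω)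
    (hode : ∀ t ∈ Set.Icc (0 : ℝ) T, HasDerivAt γ (-(gradient f (γ t))) t)
    (h0 : γ 0 = x) (hTy : γ T = y) :
    agmonDist f Ω x y = |f x - f y| ∧ |f x - f y| = f x - f y := by
  set δ : ℝ → EuclideanSpace ℝ (Fin d) := fun s => γ (T * s)
  have hscale : MapsTo (T * ·) (Icc (0 : ℝ) 1) (Icc 0 T) := fun s hs =>
    ⟨mul_nonneg hT.le hs.1, mul_le_of_le_one_right hT.le hs.2⟩
  have hδΩ : MapsTo δ (Icc 0 1) Ω := fun s hs => hmem _ (hscale hs)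
  have hδ' : ∀ s ∈ Icc (0 : ℝ) 1, HasDerivAt δ (T • -gradient f (δ s)) s := fun s hs =>
    (hode _ (hscale hs)).scomp s (((hasDerivAt_id s).const_mul T).congr_deriv (mul_one T))
  have hδC1 : ContDiffOn ℝ 1 δ (Icc 0 1) :=
    contDiffOn_one_of_forall_hasDerivAt (uniqueDiffOn_Icc zero_lt_one) hδ'
      (((hf.continuousOn_gradient hΩ).comp (HasDerivAt.continuousOn hδ') hδΩ).neg.const_smul T)
  have hlen : ∫ s in (0 : ℝ)..1, ‖gradient f (δ s)‖ * ‖deriv δ s‖ = f x - f y := by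
    rw [integral_norm_gradient_mul_norm_deriv_eq_sub_of_deriv_eq_smul zero_lt_one hf hΩ hδC1 hδΩ
      hT.le fun s hs => (hδ' s hs).deriv]
    simp [δ, h0, hTy]
  have habs : |f x - f y| = f x - f y := abs_of_nonneg <|
    hlen ▸ intervalIntegral.integral_nonneg zero_le_one fun _ _ => by positivity
  exact ⟨agmonDist_eq_of_integral_eq_abs_sub hΩ hf hδC1 hδΩ (by simp [δ, h0])
    (by simp [δ, hTy]) (by rw [habs, hlen]), habs⟩

/-- If there is an integral curve of `γ' = -∇f(γ)` joining `x` to `y` inside the open set `Ω`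
(on which `f` is `C¹`), then `d_Ag(x,y) = |f x - f y| = f x - f y`. -/
theorem agmonDist_eq_of_gradient_curve {d : ℕ} (f : EuclideanSpace ℝ (Fin d) → ℝ)
    (Ω : Set (EuclideanSpace ℝ (Fin d))) (hΩ : IsOpen Ω) (hf : ContDiffOn ℝ 1 f Ω)
    (x y : EuclideanSpace ℝ (Fin d)) (hx : x ∈ Ω) (hy : y ∈ Ω)
    (γ : ℝ → EuclideanSpace ℝ (Fin d)) (T : ℝ) (hT : 0 < T)
    (hmem : ∀ t ∈ Set.Icc (0 : ℝ) T, γ t ∈ Ω)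
    (hode : ∀ t ∈ Set.Icc (0 : ℝ) T, HasDerivAt γ (-(gradient f (γ t))) t)
    (h0 : γ 0 = x) (hTy : γ T = y) :
    agmonDist f Ω x y = |f x - f y| ∧ |f x - f y| = f x - f y :=
  agmonDist_eq_of_gradient_curve_general f Ω hΩ hf x y γ T hT hmem hode h0 hTy
end

section
/- Let f: ℝ^d → ℝ be C¹, Ω₊ ⊆ ℝ^d a bounded open set, and Ω₋ an open set with closure contained in Ω₊. Assume ∇f ≠ 0 on Ω̄₊ \ Ω₋ and that every forward gradient trajectory γ' = -∇f(γ) starting in Ω₊ that remains in Ω₊ for all time eventually enters Ω₋. Then every x ∈ Ω̄₊ \ Ω₋ with f(x) < min_{∂Ω₊} f satisfies f(x) ≥ min_{∂Ω₋} f. -/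
/-!
Suppose `f x < min_{∂Ω₋} f`. The sublevel set `S = {y ∈ Ω̄₊ | f y ≤ f x}` is compact and misses
both `∂Ω₊` and `∂Ω₋`, so the connected component `C` of `x` in `S` is compact and lies in
`Ω₊ \ Ω₋`. Let `z` minimise `f` on `C`. Since `∇f z ≠ 0`, a short segment of steepest descent
from `z` stays in `Ω₊`, where `f < f z ≤ f x` along it; so it lies in `S`, hence in `C`, and
contradicts the minimality of `f z`.
-/

open Set Filter Topology InnerProductSpace

theorem IsClosed.connectedComponentIn {X : Type*} [TopologicalSpace X] {F : Set X}
    (hF : IsClosed F) (x : X) : IsClosed (connectedComponentIn F x) := by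
  by_cases hx : x ∈ F
  · rw [connectedComponentIn_eq_image hx]
    exact hF.isClosedEmbedding_subtypeVal.isClosedMap _ isClosed_connectedComponent
  · rw [connectedComponentIn_eq_empty hx]
    exact isClosed_empty

theorem IsPreconnected.disjoint_of_disjoint_frontier {X : Type*} [TopologicalSpace X]
    {s t : Set X} (hs : IsPreconnected s) (ht : IsOpen t) (hst : Disjoint s (frontier t))
    (hs_not : ¬s ⊆ t) : Disjoint s t := by
  refine Set.disjoint_left.2 fun y hys hyt =>
    hs_not (hs.subset_of_closure_inter_subset ht ⟨y, hys, hyt⟩ ?_)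
  rintro w ⟨hw, hws⟩
  by_contra hwt
  exact hst.notMem_of_mem_left hws ⟨hw, by rwa [ht.interior_eq]⟩

theorem disjoint_preimage_Iic_of_lt_csInf {X : Type*} {f : X → ℝ} {A : Set X} {c : ℝ}
    (hA : BddBelow (f '' A)) (hc : c < sInf (f '' A)) : Disjoint (f ⁻¹' Iic c) A :=
  Set.disjoint_left.2 fun _ hy hyA =>
    notMem_of_lt_csInf (lt_of_le_of_lt hy hc) hA (mem_image_of_mem f hyA)

section Gradient

variable {E : Type*} [NormedAddCommGroup E] [InnerProductSpace ℝ E] [CompleteSpace E]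
  {f : E → ℝ} {g z : E}

theorem HasGradientAt.eventually_lt_sub_smul (hf : HasGradientAt f g z) (hg : g ≠ 0) :
    ∀ᶠ t in 𝓝[>] (0 : ℝ), f (z - t • g) < f z := by
  by_contra h
  -- Otherwise `-g` is tangent at `z` to `{y | f z ≤ f y}`, on which `z` is a minimum,
  -- so Fermat's rule gives `0 ≤ ⟪g, -g⟫`.
  have hcone : -g ∈ posTangentConeAt {y | f z ≤ f y} z := by
    refine mem_posTangentConeAt_of_frequently_mem ?_
    simpa [not_lt, sub_eq_add_neg] using not_eventually.1 h
  have hmin : IsLocalMinOn f {y | f z ≤ f y} z := IsMinOn.localize fun _ hy => hy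
  have := hmin.hasFDerivWithinAt_nonneg
    (hasGradientAt_iff_hasFDerivAt.1 hf).hasFDerivWithinAt hcone
  rw [toDual_apply_apply, inner_neg_right, real_inner_self_eq_norm_sq] at this
  exact hg (norm_eq_zero.1 (by nlinarith [norm_nonneg g]))

theorem HasGradientAt.eq_zero_of_isMinOn_connectedComponentIn {K : Set E} {c : ℝ} {x : E}
    (hzC : z ∈ connectedComponentIn (K ∩ f ⁻¹' Iic c) x)
    (hmin : IsMinOn f (connectedComponentIn (K ∩ f ⁻¹' Iic c) x) z) (hK : K ∈ 𝓝 z)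
    (hf : HasGradientAt f g z) : g = 0 := by
  by_contra hg
  set S := K ∩ f ⁻¹' Iic c
  have hzS : z ∈ S := connectedComponentIn_subset S x hzC
  have hpath : Continuous fun t : ℝ => z - t • g := by fun_prop
  have hpathK : ∀ᶠ t in 𝓝[>] (0 : ℝ), z - t • g ∈ K :=
    nhdsWithin_le_nhds (hpath.continuousAt.preimage_mem_nhds (by simpa using hK))
  obtain ⟨ε, hε, hdesc⟩ := mem_nhdsGT_iff_exists_Ioc_subset.1
    ((hf.eventually_lt_sub_smul hg).and hpathK)
  have hseg : (fun t : ℝ => z - t • g) '' Icc 0 ε ⊆ connectedComponentIn S x := by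
    rw [connectedComponentIn_eq hzC]
    refine (isPreconnected_Icc.image _ hpath.continuousOn).subset_connectedComponentIn
      ⟨0, ⟨le_rfl, hε.le⟩, by simp⟩ ?_
    rintro _ ⟨t, ht, rfl⟩
    rcases ht.1.eq_or_lt with rfl | ht0
    · simpa using hzS
    · obtain ⟨hlt, htK⟩ := hdesc ⟨ht0, ht.2⟩
      exact ⟨htK, hlt.le.trans hzS.2⟩
  exact (hdesc ⟨hε, le_rfl⟩).1.not_ge (hmin (hseg ⟨ε, ⟨hε.le, le_rfl⟩, rfl⟩))

end Gradient

theorem flow_lower_bound_general {d : ℕ} (f : EuclideanSpace ℝ (Fin d) → ℝ)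
    (hf : ContDiff ℝ 1 f)
    (Ωp Ωm : Set (EuclideanSpace ℝ (Fin d)))
    (hΩp : IsOpen Ωp) (hΩpbdd : Bornology.IsBounded Ωp) (hΩm : IsOpen Ωm)
    (hsub : closure Ωm ⊆ Ωp)
    (hgrad : ∀ x ∈ closure Ωp \ Ωm, gradient f x ≠ 0) :
    ∀ x ∈ closure Ωp \ Ωm, f x < sInf (f '' frontier Ωp) →
      sInf (f '' frontier Ωm) ≤ f x := by
  intro x ⟨hxp, hxm⟩ hxΩp
  by_contra! hxΩm
  have hfc : Continuous f := hf.continuous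
  have hK : IsCompact (closure Ωp) := hΩpbdd.isCompact_closure
  have hbdd {A} (hA : closure A ⊆ closure Ωp) : BddBelow (f '' frontier A) :=
    ((hK.of_isClosed_subset isClosed_frontier (frontier_subset_closure.trans hA)).image
      hfc).bddBelow
  set S := closure Ωp ∩ f ⁻¹' Iic (f x)
  have hSp : Disjoint S (frontier Ωp) :=
    (disjoint_preimage_Iic_of_lt_csInf (hbdd subset_rfl) hxΩp).mono_left inter_subset_right
  have hSm : Disjoint S (frontier Ωm) :=
    (disjoint_preimage_Iic_of_lt_csInf (hbdd (hsub.trans subset_closure)) hxΩm).mono_left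
      inter_subset_right
  have hxC : x ∈ connectedComponentIn S x := mem_connectedComponentIn ⟨hxp, le_refl (f x)⟩
  have hCS := connectedComponentIn_subset S x
  have hC : IsCompact (connectedComponentIn S x) := hK.of_isClosed_subset
    ((isClosed_closure.inter (isClosed_Iic.preimage hfc)).connectedComponentIn x)
    (hCS.trans inter_subset_left)
  obtain ⟨z, hzC, hzmin⟩ := hC.exists_isMinOn ⟨x, hxC⟩ hfc.continuousOn
  have hzp : z ∈ Ωp := by
    rw [← hΩp.interior_eq, ← closure_sdiff_frontier]
    exact ⟨(hCS hzC).1, hSp.notMem_of_mem_left (hCS hzC)⟩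
  have hzm : z ∉ Ωm := (isPreconnected_connectedComponentIn.disjoint_of_disjoint_frontier hΩm
    (hSm.mono_left hCS) fun h => hxm (h hxC)).notMem_of_mem_left hzC
  exact hgrad z ⟨subset_closure hzp, hzm⟩
    ((hf.differentiable one_ne_zero z).hasGradientAt.eq_zero_of_isMinOn_connectedComponentIn hzC
      hzmin (mem_of_superset (hΩp.mem_nhds hzp) subset_closure))

/-- Under Hypothesis 1 of the paper: `Ω₊` bounded open, `Ω₋` open with `Ω̄₋ ⊆ Ω₊`,
`∇f ≠ 0` on `Ω̄₊ \ Ω₋`, and every forward gradient trajectory starting in `Ω₊` and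
remaining in `Ω₊` eventually enters `Ω₋`. Then every `x ∈ Ω̄₊ \ Ω₋` with
`f x < min_{∂Ω₊} f` satisfies `min_{∂Ω₋} f ≤ f x`. -/
theorem flow_lower_bound {d : ℕ} (f : EuclideanSpace ℝ (Fin d) → ℝ)
    (hf : ContDiff ℝ 1 f)
    (Ωp Ωm : Set (EuclideanSpace ℝ (Fin d)))
    (hΩp : IsOpen Ωp) (hΩpbdd : Bornology.IsBounded Ωp) (hΩm : IsOpen Ωm)
    (hsub : closure Ωm ⊆ Ωp)
    (hgrad : ∀ x ∈ closure Ωp \ Ωm, gradient f x ≠ 0)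
    (htraj : ∀ γ : ℝ → EuclideanSpace ℝ (Fin d),
      (∀ t ≥ (0 : ℝ), HasDerivAt γ (-(gradient f (γ t))) t) →
      γ 0 ∈ Ωp → (∀ t ≥ (0 : ℝ), γ t ∈ Ωp) → ∃ t ≥ (0 : ℝ), γ t ∈ Ωm) :
    ∀ x ∈ closure Ωp \ Ωm, f x < sInf (f '' frontier Ωp) →
      sInf (f '' frontier Ωm) ≤ f x :=
  flow_lower_bound_general f hf Ωp Ωm hΩp hΩpbdd hΩm hsub hgrad
end
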